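/- Let G be a countable discrete group and f an n×n matrix over ℤ[G] admitting an ℓ² formal inverse ξ with real-valued entries. Then for every α ∈ ℤ[G]^{⊕n}: if α ∈ r(f)(ℤ[G]^{⊕n}), then for every m the infinite product ∏_{l=1}^n ∏_{g∈G} D_m((r(ξ)α)(l)(g)) equals 1; and if α ∉ r(f)(ℤ[G]^{⊕n}), then lim_{m→∞} ∏_{l=1}^n ∏_{g∈G} D_m((r(ξ)α)(l)(g)) = 0. -/

import Mathlib

open scoped Classical ENNReal

noncomputable section

/-- Convolution of a finitely supported `a : ℝ[G]` with `ξ : G → ℝ`: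
`(a*ξ)(g) = ∑_{h} a(h) ξ(h⁻¹g)`. -/
def fconvReal {G : Type*} [Group G] (a : G →₀ ℝ) (ξ : G → ℝ) : G → ℝ :=
  fun g => a.sum fun h c => c * ξ (h⁻¹ * g)

/-- Convolution of `ξ : G → ℝ` with a finitely supported `a : ℝ[G]`. -/
def fconvRealR {G : Type*} [Group G] (ξ : G → ℝ) (a : G →₀ ℝ) : G → ℝ :=
  fun g => a.sum fun h c => ξ (g * h⁻¹) * c

/-- The matrix `1̂` with diagonal entries `δ_e` and zero off-diagonal entries. -/
def oneHatReal (G : Type*) [Group G] (n : ℕ) : Matrix (Fin n) (Fin n) (G → ℝ) :=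
  fun i j g => if i = j ∧ g = 1 then 1 else 0

/-- `(fξ)_{ij} = ∑_k f_{ik} * ξ_{kj}`. -/
def matConvReal {G : Type*} [Group G] {n : ℕ} (f : Matrix (Fin n) (Fin n) (G →₀ ℝ))
    (ξ : Matrix (Fin n) (Fin n) (G → ℝ)) : Matrix (Fin n) (Fin n) (G → ℝ) :=
  fun i j => ∑ k, fconvReal (f i k) (ξ k j)

/-- `(ξf)_{ij} = ∑_k ξ_{ik} * f_{kj}`. -/
def matConvRealR {G : Type*} [Group G] {n : ℕ} (ξ : Matrix (Fin n) (Fin n) (G → ℝ))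
    (f : Matrix (Fin n) (Fin n) (G →₀ ℝ)) : Matrix (Fin n) (Fin n) (G → ℝ) :=
  fun i j => ∑ k, fconvRealR (ξ i k) (f k j)

/-- A finitely supported integer-valued function regarded as an element of `ℝ[G]`. -/
def castZR {G : Type*} [Group G] (a : MonoidAlgebra ℤ G) : G →₀ ℝ :=
  Finsupp.mapRange (Int.cast : ℤ → ℝ) Int.cast_zero a.coeff

/-- The normalized Dirichlet kernel `D_m(t) = (2m+1)⁻¹ ∑_{j=-m}^{m} cos(2πjt)`. -/
def Dm (m : ℕ) (t : ℝ) : ℝ :=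
  (2 * (m : ℝ) + 1)⁻¹ * ∑ j ∈ Finset.Icc (-(m : ℤ)) (m : ℤ), Real.cos (2 * Real.pi * (j : ℝ) * t)

/-!
Write `T = r(ξ)α`. If `α = r(f)β`, then `T = r(ξ)r(f)β = β` because `fξ = 1̂`, so `T` is
integer-valued and every factor `D_m(T(l,g))` equals `1`. Conversely, if `T` is integer-valued,
then, being in `ℓ²`, it is finitely supported, so `T = β` for some `β ∈ ℤ[G]^{⊕n}`, and
`ξf = 1̂` gives `α = r(f)r(ξ)α = r(f)β`. Hence if `α ∉ r(f)(ℤ[G]^{⊕n})` some value `t₀` of `T`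
is not an integer. Since `|D_m| ≤ 1` and `|D_m t - 1| = O(t²)`, the product converges and has
absolute value at most `|D_m t₀| ≤ ((2m+1) |sin πt₀|)⁻¹ → 0`.
-/

open Finset Filter Topology Real
open scoped BigOperators

section DirichletKernel

lemma Dm_eq_expect (m : ℕ) (t : ℝ) :
    Dm m t = 𝔼 j ∈ Icc (-(m : ℤ)) m, cos (2 * π * j * t) := by
  rw [Dm, expect_eq_sum_div_card, Int.card_Icc, div_eq_inv_mul]
  congr 2
  rw [show (m : ℤ) + 1 - -(m : ℤ) = ((2 * m + 1 : ℕ) : ℤ) by push_cast; ring, Int.toNat_natCast]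
  push_cast; ring

lemma nonempty_Icc_neg_self (m : ℕ) : (Icc (-(m : ℤ)) m).Nonempty :=
  nonempty_Icc.mpr (by omega)

lemma Dm_intCast (m : ℕ) (z : ℤ) : Dm m z = 1 := by
  rw [Dm_eq_expect]
  calc 𝔼 j ∈ Icc (-(m : ℤ)) m, cos (2 * π * j * z)
      = 𝔼 _j ∈ Icc (-(m : ℤ)) m, (1 : ℝ) := expect_congr rfl fun j _ => by
        rw [show 2 * π * j * z = ((j * z : ℤ) : ℝ) * (2 * π) by push_cast; ring,
          cos_int_mul_two_pi]
    _ = 1 := expect_const (nonempty_Icc_neg_self m) 1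

lemma abs_Dm_le_one (m : ℕ) (t : ℝ) : |Dm m t| ≤ 1 := by
  rw [Dm_eq_expect, abs_le]
  exact ⟨le_expect (nonempty_Icc_neg_self m) fun _ _ => neg_one_le_cos _,
    expect_le (nonempty_Icc_neg_self m) fun _ _ => cos_le_one _⟩

lemma abs_Dm_sub_one_le (m : ℕ) (t : ℝ) : |Dm m t - 1| ≤ 2 * (π * m * t) ^ 2 := by
  have hupper : Dm m t ≤ 1 := (abs_le.mp (abs_Dm_le_one m t)).2
  have hlower : 1 - 2 * (π * m * t) ^ 2 ≤ Dm m t := by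
    rw [Dm_eq_expect]
    refine le_expect (nonempty_Icc_neg_self m) fun j hj => ?_
    have hj : (j : ℝ) ^ 2 ≤ (m : ℝ) ^ 2 := by
      rw [mem_Icc] at hj
      exact_mod_cast sq_le_sq' (by omega) hj.2
    have := one_sub_sq_div_two_le_cos (x := 2 * π * j * t)
    nlinarith [sq_nonneg (π * t)]
  rw [abs_sub_comm, abs_of_nonneg (by linarith)]
  linarith

lemma sin_pi_mul_mul_Dm (m : ℕ) (t : ℝ) :
    sin (π * t) * ((2 * m + 1) * Dm m t) = sin ((2 * m + 1) * π * t) := by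
  have htoNat : ((m : ℤ) + 1 - -(m : ℤ)).toNat = 2 * m + 1 := by omega
  rw [Dm, ← mul_assoc (2 * (m : ℝ) + 1), mul_inv_cancel₀ (by positivity), one_mul,
    Int.Icc_eq_finset_map, sum_map, htoNat, mul_sum]
  -- `2 sin(πt) cos(2πjt) = sin((2j+1)πt) - sin((2j-1)πt)` telescopes
  have hstep (k : ℕ) : sin (π * t) * cos (2 * π * ((-(m : ℤ) + k : ℤ) : ℝ) * t)
      = (sin ((2 * (((k + 1 : ℕ) : ℝ) - m) - 1) * π * t)
          - sin ((2 * (k - m) - 1) * π * t)) / 2 := by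
    rw [eq_div_iff two_ne_zero, mul_comm _ (2 : ℝ), ← mul_assoc, two_mul_sin_mul_cos,
      show π * t - 2 * π * ((-(m : ℤ) + k : ℤ) : ℝ) * t = -((2 * (k - m) - 1) * π * t) by
        push_cast; ring, sin_neg]
    push_cast
    ring_nf
  simp only [Function.Embedding.trans_apply, Nat.castEmbedding_apply, addLeftEmbedding_apply,
    hstep, ← sum_div]
  rw [sum_range_sub (fun k : ℕ => sin ((2 * (k - m) - 1) * π * t))]
  push_cast
  rw [show (2 * ((2 * m + 1 : ℝ) - m) - 1) * π * t = (2 * m + 1) * π * t by ring,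
    show (2 * ((0 : ℝ) - m) - 1) * π * t = -((2 * m + 1) * π * t) by ring, sin_neg]
  ring

lemma tendsto_Dm_atTop_zero {t : ℝ} (ht : ∀ z : ℤ, t ≠ z) :
    Tendsto (fun m : ℕ => Dm m t) atTop (𝓝 0) := by
  have hsin : sin (π * t) ≠ 0 := by
    rw [Ne, sin_eq_zero_iff]
    rintro ⟨z, hz⟩
    exact ht z (mul_left_cancel₀ pi_ne_zero (by rw [← hz, mul_comm]))
  have hsin_pos : 0 < |sin (π * t)| := abs_pos.mpr hsin
  have hbound (m : ℕ) : ‖Dm m t‖ ≤ (|sin (π * t)| * (2 * m + 1))⁻¹ := by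
    have h := (congrArg abs (sin_pi_mul_mul_Dm m t)).trans_le (abs_sin_le_one _)
    rw [abs_mul, abs_mul, abs_of_pos (by positivity : (0 : ℝ) < 2 * m + 1), ← mul_assoc] at h
    rw [Real.norm_eq_abs, ← one_div, le_div_iff₀ (by positivity), mul_comm]
    exact h
  refine squeeze_zero_norm hbound (tendsto_inv_atTop_zero.comp ?_)
  refine Tendsto.const_mul_atTop hsin_pos (tendsto_atTop_add_const_right _ 1 ?_)
  exact tendsto_natCast_atTop_atTop.const_mul_atTop two_pos

end DirichletKernel

section InfiniteProducts

lemma multipliable_Dm_comp {ι : Type*} {t : ι → ℝ} (ht : Summable fun i => t i ^ 2) (m : ℕ) :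
    Multipliable fun i => Dm m (t i) := by
  have hsum : Summable fun i => Dm m (t i) - 1 :=
    Summable.of_norm_bounded (ht.mul_left (2 * (π * m) ^ 2)) fun i =>
      (abs_Dm_sub_one_le m (t i)).trans_eq (by ring)
  simpa using Real.multipliable_one_add_of_summable hsum

lemma norm_tprod_le_norm_of_norm_le_one {ι E : Type*} [NormedCommRing E] [NormOneClass E]
    {f : ι → E} (hf : Multipliable f) (hle : ∀ i, ‖f i‖ ≤ 1) (i₀ : ι) :
    ‖∏' i, f i‖ ≤ ‖f i₀‖ := by
  refine le_of_tendsto (Tendsto.norm hf.hasProd) ?_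
  filter_upwards [eventually_ge_atTop {i₀}] with s hs
  rw [← mul_prod_erase s f (singleton_subset_iff.mp hs)]
  have hrest : ‖∏ i ∈ s.erase i₀, f i‖ ≤ 1 :=
    (Finset.norm_prod_le _ _).trans (prod_le_one (fun _ _ => norm_nonneg _) fun i _ => hle i)
  exact (norm_mul_le _ _).trans (mul_le_of_le_one_right (norm_nonneg _) hrest)

lemma tprod_Dm_eq_one {ι : Type*} {t : ι → ℝ} (ht : ∀ i, ∃ z : ℤ, t i = z) (m : ℕ) :
    ∏' i, Dm m (t i) = 1 := by
  refine (tprod_congr fun i => ?_).trans tprod_one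
  obtain ⟨z, hz⟩ := ht i
  rw [hz, Dm_intCast]

lemma tendsto_tprod_Dm_atTop_zero {ι : Type*} {t : ι → ℝ} (ht : Summable fun i => t i ^ 2)
    {i₀ : ι} (hi₀ : ∀ z : ℤ, t i₀ ≠ z) :
    Tendsto (fun m : ℕ => ∏' i, Dm m (t i)) atTop (𝓝 0) := by
  refine squeeze_zero_norm (fun m => ?_) (by simpa using (tendsto_Dm_atTop_zero hi₀).norm)
  exact norm_tprod_le_norm_of_norm_le_one (multipliable_Dm_comp ht m)
    (fun i => abs_Dm_le_one m (t i)) i₀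

end InfiniteProducts

section Convolution

variable {G : Type*} [Group G]

lemma castZR_add (a b : MonoidAlgebra ℤ G) : castZR (a + b) = castZR a + castZR b := by
  ext g; simp [castZR]

lemma castZR_sum {ι : Type*} (s : Finset ι) (a : ι → MonoidAlgebra ℤ G) :
    castZR (∑ i ∈ s, a i) = ∑ i ∈ s, castZR (a i) :=
  map_sum (AddMonoidHom.mk' castZR castZR_add) a s

lemma castZR_single (h : G) (c : ℤ) :
    castZR (MonoidAlgebra.single h c) = Finsupp.single h (c : ℝ) := by
  simp [castZR, MonoidAlgebra.coeff_single]

lemma castZR_injective : Function.Injective (castZR (G := G)) := fun _ _ hab =>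
  MonoidAlgebra.coeff_injective (Finsupp.mapRange_injective _ Int.cast_zero Int.cast_injective hab)

lemma fconvReal_add_left (a b : G →₀ ℝ) (u : G → ℝ) :
    fconvReal (a + b) u = fconvReal a u + fconvReal b u := by
  funext g
  exact Finsupp.sum_add_index' (fun _ => zero_mul _) fun _ _ _ => add_mul _ _ _

lemma fconvReal_add_right (a : G →₀ ℝ) (u v : G → ℝ) :
    fconvReal a (u + v) = fconvReal a u + fconvReal a v := by
  funext g
  simp only [fconvReal, Pi.add_apply, mul_add, Finsupp.sum_add]

lemma fconvRealR_add_left (u v : G → ℝ) (b : G →₀ ℝ) :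
    fconvRealR (u + v) b = fconvRealR u b + fconvRealR v b := by
  funext g
  simp only [fconvRealR, Pi.add_apply, add_mul, Finsupp.sum_add]

lemma fconvRealR_add_right (u : G → ℝ) (a b : G →₀ ℝ) :
    fconvRealR u (a + b) = fconvRealR u a + fconvRealR u b := by
  funext g
  exact Finsupp.sum_add_index' (fun _ => mul_zero _) fun _ _ _ => mul_add _ _ _

@[simp]
lemma fconvReal_zero_left (u : G → ℝ) : fconvReal 0 u = 0 :=
  (AddMonoidHom.mk' (fconvReal · u) (fconvReal_add_left · · u)).map_zero

@[simp]
lemma fconvReal_zero_right (a : G →₀ ℝ) : fconvReal a 0 = 0 :=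
  (AddMonoidHom.mk' (fconvReal a) (fconvReal_add_right a)).map_zero

@[simp]
lemma fconvRealR_zero_left (b : G →₀ ℝ) : fconvRealR 0 b = 0 :=
  (AddMonoidHom.mk' (fconvRealR · b) (fconvRealR_add_left · · b)).map_zero

@[simp]
lemma fconvRealR_zero_right (u : G → ℝ) : fconvRealR u 0 = 0 :=
  (AddMonoidHom.mk' (fconvRealR u) (fconvRealR_add_right u)).map_zero

lemma fconvReal_sum_left {ι : Type*} (s : Finset ι) (a : ι → G →₀ ℝ) (u : G → ℝ) :
    fconvReal (∑ i ∈ s, a i) u = ∑ i ∈ s, fconvReal (a i) u :=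
  map_sum (AddMonoidHom.mk' (fconvReal · u) (fconvReal_add_left · · u)) a s

lemma fconvReal_sum_right {ι : Type*} (a : G →₀ ℝ) (s : Finset ι) (u : ι → G → ℝ) :
    fconvReal a (∑ i ∈ s, u i) = ∑ i ∈ s, fconvReal a (u i) :=
  map_sum (AddMonoidHom.mk' (fconvReal a) (fconvReal_add_right a)) u s

lemma fconvRealR_sum_left {ι : Type*} (s : Finset ι) (u : ι → G → ℝ) (b : G →₀ ℝ) :
    fconvRealR (∑ i ∈ s, u i) b = ∑ i ∈ s, fconvRealR (u i) b :=
  map_sum (AddMonoidHom.mk' (fconvRealR · b) (fconvRealR_add_left · · b)) u s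

lemma fconvReal_single (h : G) (c : ℝ) (u : G → ℝ) :
    fconvReal (Finsupp.single h c) u = fun g => c * u (h⁻¹ * g) := by
  funext g; exact Finsupp.sum_single_index (zero_mul _)

lemma fconvRealR_single (u : G → ℝ) (h : G) (c : ℝ) :
    fconvRealR u (Finsupp.single h c) = fun g => u (g * h⁻¹) * c := by
  funext g; exact Finsupp.sum_single_index (mul_zero _)

lemma fconvReal_castZR_mul (a b : MonoidAlgebra ℤ G) (u : G → ℝ) :
    fconvReal (castZR (a * b)) u = fconvReal (castZR a) (fconvReal (castZR b) u) := by
  induction a using MonoidAlgebra.induction_linear with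
  | zero => simp [castZR]
  | add p q hp hq => simp only [add_mul, castZR_add, fconvReal_add_left, hp, hq]
  | single h c =>
    induction b using MonoidAlgebra.induction_linear with
    | zero => simp [castZR]
    | add p q hp hq =>
      simp only [mul_add, castZR_add, fconvReal_add_left, fconvReal_add_right, hp, hq]
    | single h' c' =>
      simp only [MonoidAlgebra.single_mul_single, castZR_single, fconvReal_single, mul_inv_rev,
        mul_assoc, Int.cast_mul]

lemma fconvRealR_fconvReal (a b : G →₀ ℝ) (u : G → ℝ) :
    fconvRealR (fconvReal a u) b = fconvReal a (fconvRealR u b) := by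
  induction a using Finsupp.induction_linear with
  | zero => simp
  | add p q hp hq => simp only [fconvReal_add_left, fconvRealR_add_left, hp, hq]
  | single h c =>
    induction b using Finsupp.induction_linear with
    | zero => simp
    | add p q hp hq => simp only [fconvRealR_add_right, fconvReal_add_right, hp, hq]
    | single h' c' => simp only [fconvReal_single, fconvRealR_single, mul_assoc]

lemma fconvReal_oneHatReal {n : ℕ} (a : G →₀ ℝ) (j l : Fin n) :
    fconvReal a (oneHatReal G n j l) = if j = l then ⇑a else 0 := by
  funext g
  split_ifs with hjl
  · simpa [fconvReal, oneHatReal, hjl, inv_mul_eq_one] using fun h => h.symm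
  · simp [fconvReal, oneHatReal, hjl]

lemma memℓp_fconvReal {p : ℝ≥0∞} (hp : 0 < p.toReal) (a : G →₀ ℝ) {u : G → ℝ}
    (hu : Memℓp u p) : Memℓp (fconvReal a u) p := by
  have htranslate (h : G) : Memℓp (fun g => u (h⁻¹ * g)) p := by
    rw [memℓp_gen_iff hp] at hu ⊢
    exact (Equiv.mulLeft h⁻¹).summable_iff.mpr hu
  exact Memℓp.finsetSum a.support fun h _ => (htranslate h).const_mul (a h)

end Convolution

lemma Memℓp.summable_sq {α : Type*} {u : α → ℝ} (hu : Memℓp u 2) :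
    Summable fun i => u i ^ 2 := by
  simpa [sq_abs] using hu.summable (by norm_num : (0 : ℝ) < (2 : ℝ≥0∞).toReal)

section GroupRingModule

variable {G : Type*} [Group G] {n : ℕ}

/-- `vecMatConv a Ξ` is the paper's `r(Ξ) a`. -/
def vecMatConv (a : Fin n → G →₀ ℝ) (Ξ : Matrix (Fin n) (Fin n) (G → ℝ)) : Fin n → G → ℝ :=
  fun l => ∑ k, fconvReal (a k) (Ξ k l)

lemma memℓp_vecMatConv {p : ℝ≥0∞} (hp : 0 < p.toReal) (a : Fin n → G →₀ ℝ)
    {Ξ : Matrix (Fin n) (Fin n) (G → ℝ)} (hΞ : ∀ k l, Memℓp (Ξ k l) p) (l : Fin n) :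
    Memℓp (vecMatConv a Ξ l) p := by
  convert Memℓp.finsetSum univ fun k _ => memℓp_fconvReal hp (a k) (hΞ k l) using 1
  exact Finset.sum_fn _ _

lemma vecMatConv_castZR_vecMul (f : Matrix (Fin n) (Fin n) (MonoidAlgebra ℤ G))
    {Ξ : Matrix (Fin n) (Fin n) (G → ℝ)}
    (hfΞ : matConvReal (fun i j => castZR (f i j)) Ξ = oneHatReal G n)
    (β : Fin n → MonoidAlgebra ℤ G) :
    vecMatConv (fun k => castZR (∑ j, β j * f j k)) Ξ = fun l => ⇑(castZR (β l)) := by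
  funext l
  calc ∑ k, fconvReal (castZR (∑ j, β j * f j k)) (Ξ k l)
      = ∑ j, fconvReal (castZR (β j)) (∑ k, fconvReal (castZR (f j k)) (Ξ k l)) := by
        simp only [castZR_sum, fconvReal_sum_left, fconvReal_castZR_mul, fconvReal_sum_right]
        exact sum_comm
    _ = ∑ j, fconvReal (castZR (β j)) (oneHatReal G n j l) := by rw [← hfΞ]; rfl
    _ = castZR (β l) := by simp [fconvReal_oneHatReal]

lemma sum_fconvRealR_vecMatConv {F : Matrix (Fin n) (Fin n) (G →₀ ℝ)}
    {Ξ : Matrix (Fin n) (Fin n) (G → ℝ)} (hΞF : matConvRealR Ξ F = oneHatReal G n)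
    (a : Fin n → G →₀ ℝ) (k : Fin n) :
    ∑ l, fconvRealR (vecMatConv a Ξ l) (F l k) = a k := by
  calc ∑ l, fconvRealR (∑ j, fconvReal (a j) (Ξ j l)) (F l k)
      = ∑ j, fconvReal (a j) (∑ l, fconvRealR (Ξ j l) (F l k)) := by
        simp only [fconvRealR_sum_left, fconvRealR_fconvReal, fconvReal_sum_right]
        exact sum_comm
    _ = ∑ j, fconvReal (a j) (oneHatReal G n j k) := by rw [← hΞF]; rfl
    _ = a k := by simp [fconvReal_oneHatReal]

lemma exists_castZR_eq {u : G → ℝ} (hu : Summable fun g => u g ^ 2)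
    (hint : ∀ g, ∃ z : ℤ, u g = z) : ∃ a : MonoidAlgebra ℤ G, ⇑(castZR a) = u := by
  choose z hz using hint
  have hfin : (Function.support z).Finite := by
    refine (eventually_cofinite.mp (hu.tendsto_cofinite_zero.eventually_lt_const one_pos)).subset
      fun g hg => ?_
    rw [Set.mem_ofPred_eq, not_lt, hz, one_le_sq_iff_one_le_abs]
    exact_mod_cast Int.one_le_abs hg
  refine ⟨MonoidAlgebra.ofCoeff (Finsupp.ofSupportFinite z hfin), funext fun g => ?_⟩
  simp [castZR, Finsupp.ofSupportFinite_coe, hz]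

lemma exists_vecMul_eq_of_forall_intCast (f : Matrix (Fin n) (Fin n) (MonoidAlgebra ℤ G))
    {Ξ : Matrix (Fin n) (Fin n) (G → ℝ)}
    (hfΞ : matConvReal (fun i j => castZR (f i j)) Ξ = oneHatReal G n)
    (hΞf : matConvRealR Ξ (fun i j => castZR (f i j)) = oneHatReal G n)
    (α : Fin n → MonoidAlgebra ℤ G)
    (hsq : ∀ l, Summable fun g => vecMatConv (fun k => castZR (α k)) Ξ l g ^ 2)
    (hint : ∀ l g, ∃ z : ℤ, vecMatConv (fun k => castZR (α k)) Ξ l g = z) :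
    ∃ β : Fin n → MonoidAlgebra ℤ G, ∀ l, α l = ∑ k, β k * f k l := by
  choose β hβ using fun l => exists_castZR_eq (hsq l) (hint l)
  have hconv : vecMatConv (fun k => castZR (α k)) Ξ
      = vecMatConv (fun k => castZR (∑ j, β j * f j k)) Ξ := by
    rw [vecMatConv_castZR_vecMul f hfΞ]
    exact funext fun l => (hβ l).symm
  refine ⟨β, fun k => castZR_injective (DFunLike.coe_injective ?_)⟩
  calc ⇑(castZR (α k))
      = ∑ l, fconvRealR (vecMatConv (fun k => castZR (α k)) Ξ l) (castZR (f l k)) :=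
        (sum_fconvRealR_vecMatConv hΞf (fun k => castZR (α k)) k).symm
    _ = ⇑(castZR (∑ j, β j * f j k)) := by
        rw [hconv]
        exact sum_fconvRealR_vecMatConv hΞf (fun k => castZR (∑ j, β j * f j k)) k

end GroupRingModule

theorem dirichlet_product_dichotomy_general {G : Type*} [Group G] {n : ℕ}
    (f : Matrix (Fin n) (Fin n) (MonoidAlgebra ℤ G))
    (ξ : Matrix (Fin n) (Fin n) (lp (fun _ : G => ℝ) 2))
    (hξ : matConvReal (fun i j => castZR (f i j)) (fun i j => ⇑(ξ i j)) = oneHatReal G n ∧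
          matConvRealR (fun i j => ⇑(ξ i j)) (fun i j => castZR (f i j)) = oneHatReal G n)
    (α : Fin n → MonoidAlgebra ℤ G) :
    ((∃ β : Fin n → MonoidAlgebra ℤ G, ∀ l, α l = ∑ k, β k * f k l) →
      ∀ m : ℕ, ∏' p : Fin n × G,
        Dm m ((∑ k, fconvReal (castZR (α k)) (⇑(ξ k p.1))) p.2) = 1) ∧
    ((¬ ∃ β : Fin n → MonoidAlgebra ℤ G, ∀ l, α l = ∑ k, β k * f k l) →
      Filter.Tendsto (fun m : ℕ => ∏' p : Fin n × G,
          Dm m ((∑ k, fconvReal (castZR (α k)) (⇑(ξ k p.1))) p.2))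
        Filter.atTop (nhds 0)) := by
  obtain ⟨hfξ, hξf⟩ := hξ
  have hsq (l : Fin n) :
      Summable fun g => vecMatConv (fun k => castZR (α k)) (fun i j => ⇑(ξ i j)) l g ^ 2 :=
    (memℓp_vecMatConv (by norm_num) _ (fun k l => (ξ k l).2) l).summable_sq
  refine ⟨?_, fun hα => ?_⟩
  · rintro ⟨β, hβ⟩ m
    obtain rfl : α = fun l => ∑ k, β k * f k l := funext hβ
    refine tprod_Dm_eq_one (fun p => ⟨(β p.1).coeff p.2, ?_⟩) m
    exact congrFun (congrFun (vecMatConv_castZR_vecMul f hfξ β) p.1) p.2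
  · obtain ⟨p₀, hp₀⟩ : ∃ p : Fin n × G,
        ∀ z : ℤ, vecMatConv (fun k => castZR (α k)) (fun i j => ⇑(ξ i j)) p.1 p.2 ≠ z := by
      by_contra! hint
      exact hα (exists_vecMul_eq_of_forall_intCast f hfξ hξf α hsq fun l g => hint (l, g))
    exact tendsto_tprod_Dm_atTop_zero
      ((summable_prod_of_nonneg fun _ => sq_nonneg _).mpr ⟨hsq, .of_finite⟩) hp₀

/-- Let `f ∈ M_n(ℤ[G])` with real-valued ℓ² formal inverse `ξ`, and `α ∈ ℤ[G]^{⊕n}`.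
If `α ∈ r(f)(ℤ[G]^{⊕n})` then for every `m` the product
`∏_{l,g} D_m((r(ξ)α)(l)(g))` equals `1`; otherwise it tends to `0` as `m → ∞`. -/
theorem dirichlet_product_dichotomy {G : Type*} [Group G] [Countable G] {n : ℕ}
    (f : Matrix (Fin n) (Fin n) (MonoidAlgebra ℤ G))
    (ξ : Matrix (Fin n) (Fin n) (lp (fun _ : G => ℝ) 2))
    (hξ : matConvReal (fun i j => castZR (f i j)) (fun i j => ⇑(ξ i j)) = oneHatReal G n ∧
          matConvRealR (fun i j => ⇑(ξ i j)) (fun i j => castZR (f i j)) = oneHatReal G n)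
    (α : Fin n → MonoidAlgebra ℤ G) :
    ((∃ β : Fin n → MonoidAlgebra ℤ G, ∀ l, α l = ∑ k, β k * f k l) →
      ∀ m : ℕ, ∏' p : Fin n × G,
        Dm m ((∑ k, fconvReal (castZR (α k)) (⇑(ξ k p.1))) p.2) = 1) ∧
    ((¬ ∃ β : Fin n → MonoidAlgebra ℤ G, ∀ l, α l = ∑ k, β k * f k l) →
      Filter.Tendsto (fun m : ℕ => ∏' p : Fin n × G,
          Dm m ((∑ k, fconvReal (castZR (α k)) (⇑(ξ k p.1))) p.2))
        Filter.atTop (nhds 0)) :=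
  dirichlet_product_dichotomy_general f ξ hξ α
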